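/- Let q ≥ 3 and L ≥ 2 be fixed integers. For every ε > 0 there exists δ > 0 with the following property: for every natural number s ≥ 1 there exist constants M₀ = M₀(s) and c = c(s) such that for every n ≥ 1 and every code C ⊆ [q]^n with |C| = M ≥ M₀, at least one of the following holds: (1) there exists a subcode C' ⊆ C with |C'| ≥ s and radh(C') ≤ 1 − 1/q − δ; or (2) there exist at least M^L − c·M^{L−1} ordered L-tuples (c_1,...,c_L) of pairwise distinct codewords of C such that |type_u(c_1,...,c_L) − q^{−L}| ≤ ε for every u ∈ [q]^L, and consequently |rad_ω(φ(c_1),...,φ(c_L)) − f(U_q,ω)| ≤ q^L ε for every probability distribution ω on [L]. -/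

import Mathlib

open Finset
open scoped Classical

/-- A probability distribution on a finite type. -/
def IsDist {α : Type*} [Fintype α] (P : α → ℝ) : Prop :=
  (∀ a, 0 ≤ P a) ∧ ∑ a, P a = 1

/-- The embedding `φ : [q] → ∂Δ` sending `x` to the standard basis vector `e_x`. -/
noncomputable def phi (q : ℕ) (x : Fin q) : Fin q → ℝ := fun k => if k = x then 1 else 0

/-- `d(x,y) = (1/2) ∑_j ‖x(j) − y(j)‖₁` for blocks in `ℝ^q`. -/
noncomputable def dvec {q n : ℕ} (x y : Fin n → Fin q → ℝ) : ℝ :=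
  (1 / 2) * ∑ j, ∑ k, |x j k - y j k|

/-- The weighted average radius `rad_ω(x₁,…,x_L) = (1/n) inf_{y∈Δⁿ} ∑_i ω(i) d(xᵢ,y)`. -/
noncomputable def radOmega {q n L : ℕ} (ω : Fin L → ℝ) (xs : Fin L → Fin n → Fin q → ℝ) : ℝ :=
  (1 / (n : ℝ)) *
    sInf {r : ℝ | ∃ y : Fin n → Fin q → ℝ, (∀ j, IsDist (y j)) ∧ r = ∑ i, ω i * dvec (xs i) y}

/-- The Chebyshev radius of a code: `radh(C) = (1/n) min_{y∈[q]^n} max_{c∈C} d_H(c,y)`. -/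
noncomputable def radhCode {q n : ℕ} (C : Finset (Fin n → Fin q)) : ℝ :=
  (1 / (n : ℝ)) * ⨅ y : Fin n → Fin q, sSup {d : ℝ | ∃ c ∈ C, d = (hammingDist c y : ℝ)}

/-- `max_ω(x₁,…,x_L) = max_{x∈[q]} ∑_{i : xᵢ = x} ω(i)`. -/
noncomputable def maxOmega {q L : ℕ} (ω : Fin L → ℝ) (x : Fin L → Fin q) : ℝ :=
  ⨆ a : Fin q, ∑ i ∈ Finset.univ.filter (fun i => x i = a), ω i

/-- `f(P,ω) = 1 − ∑_{x∈[q]^L} (∏ᵢ P(xᵢ)) · max_ω(x)`. -/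
noncomputable def fF {q L : ℕ} (P : Fin q → ℝ) (ω : Fin L → ℝ) : ℝ :=
  1 - ∑ x : Fin L → Fin q, (∏ i, P (x i)) * maxOmega ω x

/-- `type_u(c₁,…,c_L) = (1/n)·|{i : (c₁(i),…,c_L(i)) = u}|`. -/
noncomputable def typeu {q n L : ℕ} (cs : Fin L → Fin n → Fin q) (u : Fin L → Fin q) : ℝ :=
  ((Finset.univ.filter fun j : Fin n => ∀ i, cs i j = u i).card : ℝ) / (n : ℝ)

/-!
Take `δ = ε / (2q)^L`, and suppose no `s` codewords lie in a Hamming ball of radius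
`(1 - 1/q - δ) n`. Call a tuple balanced at length `ℓ` if every pattern of its first `ℓ` words
occurs on a fraction `q^{-ℓ} ± ε / (2q)^{L-ℓ}` of the coordinates. Every tuple is balanced at
length `0`; one balanced at length `i` but not at `i + 1` has a pattern of length `i + 1` that
occurs too often. Fix all words but the `i`-th. If more than `q^L s` choices of the `i`-th word
broke the balance, `s` of them would overrepresent the same pattern `u`, so all of them would read
`u i` on a large part of the coordinates where the other words read the prefix of `u`. The word
that is `u i` there and, by a second-moment count, agrees with each of the `s` codewords on about a
`1/q` fraction of the remaining coordinates is then a center of too small a radius. Hence all but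
`O(M^{L-1})` tuples are injective and balanced at length `L`, i.e. have all types within `ε` of
`q^{-L}`; and for the embedded tuple the infimum defining `rad_ω` is attained at a vertex in every
coordinate, which gives `rad_ω = 1 - ∑_u type_u · max_ω(u)`, within `q^L ε` of `f(U_q, ω)`.
-/

section Radius

variable {q n L : ℕ}

lemma IsDist.le_one {α : Type*} [Fintype α] {P : α → ℝ} (hP : IsDist P) (a : α) : P a ≤ 1 :=
  hP.2 ▸ single_le_sum (fun b _ => hP.1 b) (mem_univ a)

lemma isDist_phi (a : Fin q) : IsDist (phi q a) :=
  ⟨fun k => by unfold phi; split_ifs <;> norm_num, by simp [phi]⟩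

lemma le_maxOmega [NeZero q] (ω : Fin L → ℝ) (x : Fin L → Fin q) (a : Fin q) :
    ∑ i with x i = a, ω i ≤ maxOmega ω x :=
  le_ciSup (f := fun a => ∑ i with x i = a, ω i) (Set.finite_range _).bddAbove a

lemma exists_maxOmega_eq [NeZero q] (ω : Fin L → ℝ) (x : Fin L → Fin q) :
    ∃ a : Fin q, maxOmega ω x = ∑ i with x i = a, ω i := by
  obtain ⟨a, -, ha⟩ := exists_max_image univ (fun a : Fin q => ∑ i with x i = a, ω i) univ_nonempty
  exact ⟨a, le_antisymm (ciSup_le fun b => ha b (mem_univ b)) (le_maxOmega ω x a)⟩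

lemma maxOmega_nonneg [NeZero q] {ω : Fin L → ℝ} (hω : IsDist ω) (x : Fin L → Fin q) :
    0 ≤ maxOmega ω x :=
  (sum_nonneg fun i _ => hω.1 i).trans (le_maxOmega ω x 0)

lemma maxOmega_le_one [NeZero q] {ω : Fin L → ℝ} (hω : IsDist ω) (x : Fin L → Fin q) :
    maxOmega ω x ≤ 1 :=
  ciSup_le fun _ => hω.2 ▸ sum_le_sum_of_subset_of_nonneg (filter_subset _ _) fun i _ _ => hω.1 i

lemma dvec_phi (x : Fin n → Fin q) {y : Fin n → Fin q → ℝ} (hy : ∀ j, IsDist (y j)) :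
    dvec (fun j => phi q (x j)) y = ∑ j, (1 - y j (x j)) := by
  rw [dvec, mul_sum]
  refine sum_congr rfl fun j _ => ?_
  have hrest : ∑ k ∈ univ.erase (x j), |phi q (x j) k - y j k| = 1 - y j (x j) := by
    rw [← (hy j).2, ← sum_erase_add _ _ (mem_univ (x j)), add_sub_cancel_right]
    refine sum_congr rfl fun k hk => ?_
    rw [phi, if_neg (ne_of_mem_erase hk), zero_sub, abs_neg, abs_of_nonneg ((hy j).1 k)]
  rw [← add_sum_erase _ _ (mem_univ (x j)), hrest, phi, if_pos rfl,
    abs_of_nonneg (sub_nonneg.2 ((hy j).le_one _))]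
  ring

lemma sum_mul_dvec_phi {ω : Fin L → ℝ} (hω : IsDist ω) (cs : Fin L → Fin n → Fin q)
    {y : Fin n → Fin q → ℝ} (hy : ∀ j, IsDist (y j)) :
    ∑ i, ω i * dvec (fun j => phi q (cs i j)) y
      = ∑ j, (1 - ∑ a, y j a * ∑ i with cs i j = a, ω i) := by
  simp_rw [dvec_phi _ hy, mul_sum]
  rw [sum_comm]
  refine sum_congr rfl fun j _ => ?_
  simp_rw [mul_one_sub, sum_sub_distrib, hω.2]
  congr 1
  rw [← sum_fiberwise univ (fun i => cs i j)]
  exact sum_congr rfl fun a _ => sum_congr rfl fun i hi => by rw [(mem_filter.1 hi).2, mul_comm]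

lemma radOmega_phi [NeZero q] {ω : Fin L → ℝ} (hω : IsDist ω) (cs : Fin L → Fin n → Fin q) :
    radOmega ω (fun i j => phi q (cs i j))
      = 1 / n * ∑ j, (1 - maxOmega ω fun i => cs i j) := by
  rw [radOmega]
  congr 1
  refine IsLeast.csInf_eq ⟨?_, ?_⟩
  · choose a ha using fun j => exists_maxOmega_eq ω fun i => cs i j
    refine ⟨fun j => phi q (a j), fun j => isDist_phi _, ?_⟩
    rw [sum_mul_dvec_phi hω cs fun j => isDist_phi _]
    simp [phi, ha]
  · rintro r ⟨y, hy, rfl⟩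
    rw [sum_mul_dvec_phi hω cs hy]
    refine sum_le_sum fun j _ => sub_le_sub_left ?_ _
    calc ∑ a, y j a * ∑ i with cs i j = a, ω i
        ≤ ∑ a, y j a * maxOmega ω fun i => cs i j :=
          sum_le_sum fun a _ => mul_le_mul_of_nonneg_left (le_maxOmega ω _ a) ((hy j).1 a)
      _ = maxOmega ω fun i => cs i j := by rw [← sum_mul, (hy j).2, one_mul]

lemma sum_column_eq_mul_sum_typeu (cs : Fin L → Fin n → Fin q) (F : (Fin L → Fin q) → ℝ) :
    ∑ j, F (fun i => cs i j) = n * ∑ u, typeu cs u * F u := by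
  rcases Nat.eq_zero_or_pos n with rfl | hn
  · simp
  rw [← sum_fiberwise univ (fun j i => cs i j), mul_sum]
  refine sum_congr rfl fun u _ => ?_
  rw [sum_congr rfl fun j hj => congrArg F (mem_filter.1 hj).2, sum_const, nsmul_eq_mul, typeu,
    ← mul_assoc, mul_div_cancel₀ _ (by positivity)]
  congr 3
  ext j
  simp [funext_iff]

lemma sum_typeu (hn : 0 < n) (cs : Fin L → Fin n → Fin q) : ∑ u, typeu cs u = 1 := by
  have h := sum_column_eq_mul_sum_typeu cs fun _ => 1
  simp only [sum_const, card_univ, Fintype.card_fin, nsmul_eq_mul, mul_one] at h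
  exact (mul_right_injective₀ (by positivity : (n : ℝ) ≠ 0) (h.symm.trans (mul_one _).symm))

lemma radOmega_phi_eq_one_sub [NeZero q] (hn : 0 < n) {ω : Fin L → ℝ} (hω : IsDist ω)
    (cs : Fin L → Fin n → Fin q) :
    radOmega ω (fun i j => phi q (cs i j)) = 1 - ∑ u, typeu cs u * maxOmega ω u := by
  rw [radOmega_phi hω, sum_column_eq_mul_sum_typeu cs fun u => 1 - maxOmega ω u, ← mul_assoc,
    one_div_mul_cancel (by positivity), one_mul]
  simp_rw [mul_one_sub, sum_sub_distrib, sum_typeu hn]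

lemma fF_uniform (ω : Fin L → ℝ) :
    fF (fun _ : Fin q => 1 / (q : ℝ)) ω
      = 1 - ∑ u : Fin L → Fin q, 1 / (q : ℝ) ^ L * maxOmega ω u := by
  simp [fF, prod_const]

lemma abs_radOmega_sub_fF_le [NeZero q] (hn : 0 < n) {ε : ℝ} (cs : Fin L → Fin n → Fin q)
    (hcs : ∀ u, |typeu cs u - 1 / (q : ℝ) ^ L| ≤ ε) {ω : Fin L → ℝ} (hω : IsDist ω) :
    |radOmega ω (fun i j => phi q (cs i j)) - fF (fun _ : Fin q => 1 / (q : ℝ)) ω|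
      ≤ (q : ℝ) ^ L * ε := by
  rw [radOmega_phi_eq_one_sub hn hω, fF_uniform, sub_sub_sub_cancel_left, ← sum_sub_distrib]
  calc |∑ u, (1 / (q : ℝ) ^ L * maxOmega ω u - typeu cs u * maxOmega ω u)|
      ≤ ∑ u, |1 / (q : ℝ) ^ L - typeu cs u| * |maxOmega ω u| := by
        simp_rw [← sub_mul, ← abs_mul]; exact abs_sum_le_sum_abs _ _
    _ ≤ ∑ _u : Fin L → Fin q, ε * 1 := by
        gcongr with u
        · exact (abs_nonneg _).trans (hcs u)
        · rw [abs_sub_comm]; exact hcs u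
        · rw [abs_of_nonneg (maxOmega_nonneg hω u)]; exact maxOmega_le_one hω u
    _ = (q : ℝ) ^ L * ε := by simp

lemma radhCode_le_of_forall_hammingDist_le {C : Finset (Fin n → Fin q)} (hC : C.Nonempty)
    (y : Fin n → Fin q) {D : ℝ} (hD : ∀ c ∈ C, (hammingDist c y : ℝ) ≤ D) :
    radhCode C ≤ D / n := by
  have hset : ∀ z : Fin n → Fin q, {d : ℝ | ∃ c ∈ C, d = hammingDist c z}
      = (fun c => (hammingDist c z : ℝ)) '' C := fun z => by ext; simp [eq_comm]
  obtain ⟨c₀, hc₀⟩ := hC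
  have hbdd : BddBelow (Set.range fun z : Fin n → Fin q =>
      sSup {d : ℝ | ∃ c ∈ C, d = hammingDist c z}) := by
    refine ⟨0, Set.forall_mem_range.2 fun z => ?_⟩
    rw [hset]
    exact (Nat.cast_nonneg _).trans (le_csSup (C.finite_toSet.image _).bddAbove ⟨c₀, hc₀, rfl⟩)
  rw [radhCode, one_div_mul_eq_div]
  gcongr
  refine (ciInf_le hbdd y).trans (csSup_le ⟨_, c₀, hc₀, rfl⟩ ?_)
  rintro d ⟨c, hc, rfl⟩
  exact hD c hc

lemma card_filter_hammingDist_le_lt {C : Finset (Fin n → Fin q)} {s : ℕ} {r : ℝ} (hn : 0 < n)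
    (hs : 1 ≤ s) (hC : ¬ ∃ C' ⊆ C, s ≤ #C' ∧ radhCode C' ≤ r) (y : Fin n → Fin q) :
    #{c ∈ C | (hammingDist c y : ℝ) ≤ r * n} < s := by
  by_contra! hmany
  have hne : ({c ∈ C | (hammingDist c y : ℝ) ≤ r * n}).Nonempty := card_pos.1 (by omega)
  have hrad := radhCode_le_of_forall_hammingDist_le hne y fun c hc => (mem_filter.1 hc).2
  rw [mul_div_cancel_right₀ _ (by positivity)] at hrad
  exact hC ⟨_, filter_subset _ _, hmany, hrad⟩

end Radius

section SecondMoment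

variable {α : Type*} [Fintype α]

/-- The variance of a sum of independent centred variables: for rows of zero sum the cross terms
cancel. -/
lemma card_mul_sum_sq_sum_eq (m : ℕ) (f : Fin m → α → ℝ) (hf : ∀ j, ∑ v, f j v = 0) :
    Fintype.card α * ∑ z : Fin m → α, (∑ j, f j (z j)) ^ 2
      = Fintype.card α ^ m * ∑ j, ∑ v, f j v ^ 2 := by
  induction m with
  | zero => simp
  | succ m ih =>
    have ih' := ih (fun j => f j.succ) fun j => hf j.succ
    rw [← (Fin.consEquiv fun _ => α).sum_comp, Fintype.sum_prod_type]
    simp only [Fin.consEquiv_apply, Fin.sum_univ_succ, Fin.cons_zero, Fin.cons_succ, add_sq,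
      sum_add_distrib, sum_const, card_univ, Fintype.card_fun, Fintype.card_fin, nsmul_eq_mul,
      ← mul_sum, ← sum_mul, hf 0]
    push_cast
    linear_combination (Fintype.card α : ℝ) * ih'

lemma sum_sq_sum_le (m : ℕ) (f : Fin m → α → ℝ) (hf : ∀ j, ∑ v, f j v = 0)
    (hf₁ : ∀ j v, |f j v| ≤ 1) :
    ∑ z : Fin m → α, (∑ j, f j (z j)) ^ 2 ≤ m * Fintype.card α ^ m := by
  rcases isEmpty_or_nonempty α with hα | hα
  · rcases m with _ | m <;> simp
  have hcard : (0 : ℝ) < Fintype.card α := by exact_mod_cast Fintype.card_pos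
  refine le_of_mul_le_mul_left ?_ hcard
  rw [card_mul_sum_sq_sum_eq m f hf]
  calc (Fintype.card α : ℝ) ^ m * ∑ j, ∑ v, f j v ^ 2
      ≤ Fintype.card α ^ m * ∑ _j : Fin m, ∑ _v : α, (1 : ℝ) := by
        gcongr with j _ v
        exact (sq_le_one_iff_abs_le_one _).2 (hf₁ j v)
    _ = Fintype.card α * (m * Fintype.card α ^ m) := by simp; ring

lemma exists_forall_card_agree_ge [DecidableEq α] [Nonempty α] {n : ℕ} (S : Finset (Fin n))
    (E : Finset (Fin n → α)) {t : ℝ} (ht : 0 ≤ t) (hE : #E * n ≤ t ^ 2) :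
    ∃ z : Fin n → α, ∀ c ∈ E, #S / Fintype.card α - t ≤ #{j ∈ S | z j = c j} := by
  -- otherwise the squared deviations `g c z` summed over `c ∈ E` exceed `t ^ 2` for every `z`,
  -- against their second-moment bound
  by_contra! hfar
  set q : ℝ := (Fintype.card α : ℝ)
  have hq : 1 ≤ q := Nat.one_le_cast.2 Fintype.card_pos
  set g : (Fin n → α) → (Fin n → α) → ℝ := fun c z => #{j ∈ S | z j = c j} - #S / q
  set f : (Fin n → α) → Fin n → α → ℝ := fun c j v =>
    if j ∈ S then (if v = c j then 1 else 0) - 1 / q else 0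
  have hfg : ∀ c z, ∑ j, f c j (z j) = g c z := fun c z => by
    rw [← sum_filter, filter_mem_eq_inter, univ_inter, sum_sub_distrib, sum_boole, sum_const,
      nsmul_eq_mul, mul_one_div]
  have hmoment : ∀ c, ∑ z, g c z ^ 2 ≤ n * q ^ n := fun c => by
    simp_rw [← hfg]
    refine sum_sq_sum_le n _ (fun j => ?_) fun j v => ?_
    · by_cases hj : j ∈ S
      · simp [f, hj, sum_sub_distrib, q, (zero_lt_one.trans_le hq).ne']
      · simp [f, hj]
    · have : 1 / q ≤ 1 := div_le_one_of_le₀ hq (by linarith)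
      have : 0 ≤ 1 / q := by positivity
      simp only [f]
      split_ifs <;> rw [abs_le] <;> constructor <;> linarith
  have hlarge : ∀ z, t ^ 2 < ∑ c ∈ E, g c z ^ 2 := fun z => by
    obtain ⟨c, hc, hcz⟩ := hfar z
    have : t ^ 2 < g c z ^ 2 := by nlinarith
    exact this.trans_le (single_le_sum (fun c _ => sq_nonneg (g c z)) hc)
  have hsum := (sum_lt_sum_of_nonempty univ_nonempty fun z (_ : z ∈ univ) => hlarge z).trans_le
    ((sum_comm (s := univ) (t := E) ..).trans_le (sum_le_sum fun c (_ : c ∈ E) => hmoment c))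
  simp only [sum_const, card_univ, Fintype.card_fun, Fintype.card_fin, nsmul_eq_mul] at hsum
  push_cast at hsum
  nlinarith [pow_pos (zero_lt_one.trans_le hq) n]

lemma exists_hammingDist_le [DecidableEq α] [Nonempty α] {n : ℕ}
    (P : Finset (Fin n)) (a : α) (E : Finset (Fin n → α)) {t : ℝ} (ht : 0 ≤ t)
    (hE : #E * n ≤ t ^ 2) :
    ∃ y : Fin n → α, ∀ c ∈ E,
      (hammingDist c y : ℝ) ≤ n - #{j ∈ P | c j = a} - (n - #P) / Fintype.card α + t := by
  obtain ⟨z, hz⟩ := exists_forall_card_agree_ge Pᶜ E ht hE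
  refine ⟨fun j => if j ∈ P then a else z j, fun c hc => ?_⟩
  have hagree : #{j ∈ P | c j = a} + #{j ∈ Pᶜ | z j = c j}
      ≤ #{j | c j = if j ∈ P then a else z j} := by
    rw [← card_union_of_disjoint (disjoint_filter_filter disjoint_compl_right)]
    refine card_le_card fun j => ?_
    simp only [mem_union, mem_filter, mem_compl, mem_univ, true_and]
    rintro (⟨hj, h⟩ | ⟨hj, h⟩) <;> simp [hj, h]
  have htotal : hammingDist c (fun j => if j ∈ P then a else z j)
      + #{j | c j = if j ∈ P then a else z j} = n := by
    rw [hammingDist, add_comm, card_filter_add_card_filter_not, card_univ, Fintype.card_fin]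
  have hcompl : (#Pᶜ : ℝ) = n - #P := by
    rw [card_compl, Fintype.card_fin,
      Nat.cast_sub (card_le_univ P |>.trans_eq (Fintype.card_fin n))]
  have hzc := hz c hc
  rw [hcompl] at hzc
  have hsplit : (hammingDist c (fun j => if j ∈ P then a else z j) : ℝ) + #{j ∈ P | c j = a}
      + #{j ∈ Pᶜ | z j = c j} ≤ n := by
    rw [add_assoc]; exact_mod_cast htotal ▸ Nat.add_le_add_left hagree _
  linarith

end SecondMoment

section PrefixType

variable {q n L : ℕ}

def prefixMatch (ℓ : ℕ) (cs : Fin L → Fin n → Fin q) (u : Fin L → Fin q) : Finset (Fin n) :=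
  {j | ∀ i : Fin L, (i : ℕ) < ℓ → cs i j = u i}

noncomputable def prefixType (ℓ : ℕ) (cs : Fin L → Fin n → Fin q) (u : Fin L → Fin q) : ℝ :=
  #(prefixMatch ℓ cs u) / n

lemma prefixMatch_congr {ℓ : ℕ} {cs cs' : Fin L → Fin n → Fin q} {u u' : Fin L → Fin q}
    (hcs : ∀ i : Fin L, (i : ℕ) < ℓ → cs i = cs' i)
    (hu : ∀ i : Fin L, (i : ℕ) < ℓ → u i = u' i) :
    prefixMatch ℓ cs u = prefixMatch ℓ cs' u' := by
  ext j
  simp only [prefixMatch, mem_filter, mem_univ, true_and]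
  exact forall_congr' fun i => imp_congr_right fun hi => by rw [hcs i hi, hu i hi]

lemma prefixMatch_update_words {ℓ : ℕ} {i : Fin L} (hℓ : ℓ ≤ i) (cs : Fin L → Fin n → Fin q)
    (c : Fin n → Fin q) (u : Fin L → Fin q) :
    prefixMatch ℓ (Function.update cs i c) u = prefixMatch ℓ cs u :=
  prefixMatch_congr (fun _ hi' => Function.update_of_ne (by rintro rfl; omega) _ _) fun _ _ => rfl

lemma prefixMatch_update_pattern {ℓ : ℕ} {i : Fin L} (hℓ : ℓ ≤ i) (cs : Fin L → Fin n → Fin q)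
    (u : Fin L → Fin q) (a : Fin q) :
    prefixMatch ℓ cs (Function.update u i a) = prefixMatch ℓ cs u :=
  prefixMatch_congr (fun _ _ => rfl) fun _ hi' => Function.update_of_ne (by rintro rfl; omega) _ _

lemma prefixMatch_succ (i : Fin L) (cs : Fin L → Fin n → Fin q) (u : Fin L → Fin q) :
    prefixMatch (i + 1) cs u = {j ∈ prefixMatch i cs u | cs i j = u i} := by
  ext j
  simp only [prefixMatch, mem_filter, mem_univ, true_and]
  constructor
  · exact fun h => ⟨fun i' hi' => h i' (by omega), h i (by omega)⟩
  · rintro ⟨h, hi⟩ i' hi'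
    rcases (Nat.lt_succ_iff_lt_or_eq.1 hi') with hlt | heq
    · exact h i' hlt
    · exact Fin.ext heq ▸ hi

lemma prefixType_zero (hn : 0 < n) (cs : Fin L → Fin n → Fin q) (u : Fin L → Fin q) :
    prefixType 0 cs u = 1 := by
  have : prefixMatch 0 cs u = univ := by simp [prefixMatch]
  rw [prefixType, this, card_univ, Fintype.card_fin, div_self (by positivity)]

lemma prefixType_len (cs : Fin L → Fin n → Fin q) (u : Fin L → Fin q) :
    prefixType L cs u = typeu cs u := by
  simp [prefixType, typeu, prefixMatch]

lemma prefixType_succ_update (i : Fin L) (cs : Fin L → Fin n → Fin q) (c : Fin n → Fin q)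
    (u : Fin L → Fin q) :
    prefixType (i + 1) (Function.update cs i c) u
      = #{j ∈ prefixMatch i cs u | c j = u i} / n := by
  rw [prefixType, prefixMatch_succ, Function.update_self, prefixMatch_update_words le_rfl]

lemma sum_prefixType_succ (i : Fin L) (cs : Fin L → Fin n → Fin q) (u : Fin L → Fin q) :
    ∑ a, prefixType (i + 1) cs (Function.update u i a) = prefixType i cs u := by
  simp_rw [prefixType, ← sum_div, prefixMatch_succ, Function.update_self]
  congr 1
  rw [card_eq_sum_card_fiberwise (f := fun j => cs i j) (t := univ) fun _ _ => mem_univ _]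
  push_cast
  refine sum_congr rfl fun a _ => ?_
  rw [prefixMatch_update_pattern le_rfl]

end PrefixType

section Balanced

variable {q n L : ℕ}

/-- Grows by the factor `2 q` from one prefix length to the next, so that a deviation at length
`ℓ + 1` survives the averaging over the `q` extensions of a pattern of length `ℓ`. -/
noncomputable def prefixTol (q L : ℕ) (ε : ℝ) (ℓ : ℕ) : ℝ := ε / (2 * q) ^ (L - ℓ)

def PrefixBalanced (ε : ℝ) (ℓ : ℕ) (cs : Fin L → Fin n → Fin q) : Prop :=
  ∀ u, |prefixType ℓ cs u - 1 / (q : ℝ) ^ ℓ| ≤ prefixTol q L ε ℓ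

lemma prefixTol_succ [NeZero q] (ε : ℝ) (i : Fin L) :
    prefixTol q L ε (i + 1) = 2 * q * prefixTol q L ε i := by
  have hq : (q : ℝ) ≠ 0 := NeZero.ne _
  rw [prefixTol, prefixTol, show L - i = L - (i + 1) + 1 by omega, pow_succ]
  field_simp

lemma prefixTol_zero_le (hq : 1 ≤ q) {ε : ℝ} (hε : 0 ≤ ε) (ℓ : ℕ) :
    prefixTol q (L := L) ε 0 ≤ prefixTol q L ε ℓ := by
  have : (1 : ℝ) ≤ 2 * q := by norm_cast; omega
  exact div_le_div_of_nonneg_left hε (by positivity) (pow_le_pow_right₀ this (by omega))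

lemma prefixBalanced_zero (hn : 0 < n) {ε : ℝ} (hε : 0 ≤ ε) (cs : Fin L → Fin n → Fin q) :
    PrefixBalanced ε 0 cs := fun u => by
  rw [prefixType_zero hn, pow_zero, div_one, sub_self, abs_zero, prefixTol]
  positivity

lemma PrefixBalanced.abs_typeu_sub_le {ε : ℝ} {cs : Fin L → Fin n → Fin q}
    (h : PrefixBalanced ε L cs) (u : Fin L → Fin q) : |typeu cs u - 1 / (q : ℝ) ^ L| ≤ ε := by
  simpa [prefixType_len, prefixTol] using h u

lemma prefixBalanced_update_iff {ε : ℝ} (i : Fin L) (cs : Fin L → Fin n → Fin q)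
    (c : Fin n → Fin q) : PrefixBalanced ε i (Function.update cs i c) ↔ PrefixBalanced ε i cs := by
  simp only [PrefixBalanced, prefixType, prefixMatch_update_words le_rfl]

/-- A pattern of length `i + 1` that is too rare forces one of its `q - 1` siblings, which
share its balanced restriction to length `i`, to be too frequent. -/
lemma exists_le_prefixType_of_not_prefixBalanced (hq : 2 ≤ q) {ε : ℝ}
    {cs : Fin L → Fin n → Fin q} (i : Fin L) (hi : PrefixBalanced ε i cs)
    (hi' : ¬ PrefixBalanced ε (i + 1) cs) :
    ∃ u, 1 / (q : ℝ) ^ ((i : ℕ) + 1) + 2 * prefixTol q L ε i ≤ prefixType (i + 1) cs u := by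
  have : NeZero q := ⟨by omega⟩
  obtain ⟨u, hu⟩ := not_forall.1 hi'
  set p : ℝ := 1 / (q : ℝ) ^ ((i : ℕ) + 1)
  set τ := prefixTol q L ε i
  have hqR : (2 : ℝ) ≤ q := by exact_mod_cast hq
  have hτ : 0 ≤ τ := (abs_nonneg _).trans (hi u)
  rw [prefixTol_succ, not_le] at hu
  rcases le_or_gt p (prefixType (i + 1) cs u) with hup | hdown
  · refine ⟨u, ?_⟩
    rw [abs_of_nonneg (sub_nonneg.2 hup)] at hu
    nlinarith
  rw [abs_of_neg (sub_neg.2 hdown)] at hu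
  have hparent : (q : ℝ) * p - τ ≤ prefixType i cs u := by
    have := (abs_le.1 (hi u)).1
    have hp : (q : ℝ) * p = 1 / (q : ℝ) ^ (i : ℕ) := by
      simp only [p, pow_succ]; field_simp
    linarith
  have hsiblings : ∑ _a ∈ univ.erase (u i), (p + 2 * τ)
      ≤ ∑ a ∈ univ.erase (u i), prefixType (i + 1) cs (Function.update u i a) := by
    rw [sum_const, card_erase_of_mem (mem_univ _), card_univ, Fintype.card_fin, nsmul_eq_mul,
      Nat.cast_sub (by omega), Nat.cast_one, sum_erase_eq_sub (mem_univ _), sum_prefixType_succ,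
      Function.update_eq_self]
    linarith
  obtain ⟨a, -, ha⟩ := exists_le_of_sum_le
    ((univ.erase (u i)).card_pos.1 (by rw [card_erase_of_mem (mem_univ _)]; simp; omega)) hsiblings
  exact ⟨_, ha⟩

end Balanced

section Extension

variable {q n L : ℕ} {ε δ : ℝ} {s : ℕ} {C : Finset (Fin n → Fin q)}

/-- The codewords `c` that make the pattern `u` too frequent all read `u i` on a large part of
`P = prefixMatch i g u`. A center equal to `u i` on `P`, and agreeing with each of `s` such
codewords on about a `1/q` fraction of the rest, is then too close to all of them. -/
lemma card_filter_le_prefixType_update_lt (hq : 2 ≤ q) (hδ : 0 ≤ δ) (i : Fin L)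
    (hδi : δ ≤ prefixTol q L ε i) (hn : 4 * s ≤ δ ^ 2 * n)
    (hC : ∀ y, #{c ∈ C | (hammingDist c y : ℝ) ≤ (1 - 1 / q - δ) * n} < s)
    {g : Fin L → Fin n → Fin q} (hg : PrefixBalanced ε i g) (u : Fin L → Fin q) :
    #{c ∈ C | 1 / (q : ℝ) ^ ((i : ℕ) + 1) + 2 * prefixTol q L ε i
      ≤ prefixType (i + 1) (Function.update g i c) u} < s := by
  have : NeZero q := ⟨by omega⟩
  by_contra! hmany
  obtain ⟨E, hEC, hEcard⟩ := exists_subset_card_eq hmany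
  set P := prefixMatch i g u
  set p : ℝ := 1 / (q : ℝ) ^ ((i : ℕ) + 1)
  set τ := prefixTol q L ε i
  have hqR : (2 : ℝ) ≤ q := by exact_mod_cast hq
  have hs : (1 : ℝ) ≤ s := by exact_mod_cast (Nat.zero_le _).trans_lt (hC 0)
  have hnR : (0 : ℝ) < n := by
    by_contra! h
    nlinarith [mul_nonneg (sq_nonneg δ) (Nat.cast_nonneg (α := ℝ) n)]
  have hP : (#P : ℝ) / q ≤ p * n + τ * n / q := by
    have hup := (abs_le.1 (hg u)).2
    rw [prefixType, sub_le_iff_le_add, div_le_iff₀ hnR] at hup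
    rw [div_le_iff₀ (by positivity)]
    have : (1 / (q : ℝ) ^ (i : ℕ) + τ) * n = (p * n + τ * n / q) * q := by
      simp only [p, pow_succ]; field_simp
    linarith
  have hagree : ∀ c ∈ E, (p + 2 * τ) * n ≤ #{j ∈ P | c j = u i} := fun c hc => by
    have hc := (mem_filter.1 (hEC hc)).2
    rwa [prefixType_succ_update, le_div_iff₀ hnR] at hc
  obtain ⟨y, hy⟩ := exists_hammingDist_le P (u i) E (t := δ * n / 2)
    (div_nonneg (mul_nonneg hδ hnR.le) two_pos.le)
    (by rw [hEcard]; nlinarith)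
  refine (hC y).not_ge (hEcard ▸ card_le_card fun c hc =>
    mem_filter.2 ⟨(mem_filter.1 (hEC hc)).1, ?_⟩)
  have hdist := hy c hc
  have hcP := hagree c hc
  rw [Fintype.card_fin] at hdist
  have h₁ : τ * n / q ≤ τ * n / 2 := div_le_div_of_nonneg_left
    (mul_nonneg (hδ.trans hδi) hnR.le) two_pos hqR
  have h₂ : δ * n ≤ τ * n := mul_le_mul_of_nonneg_right hδi hnR.le
  have h₃ : (1 - 1 / (q : ℝ) - δ) * n = n - n / q - δ * n := by ring
  have h₄ : ((n : ℝ) - #P) / q = n / q - #P / q := sub_div _ _ _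
  linarith

lemma card_filter_not_prefixBalanced_update_le (hq : 2 ≤ q) (hδ : 0 ≤ δ) (i : Fin L)
    (hδi : δ ≤ prefixTol q L ε i) (hn : 4 * s ≤ δ ^ 2 * n)
    (hC : ∀ y, #{c ∈ C | (hammingDist c y : ℝ) ≤ (1 - 1 / q - δ) * n} < s)
    {g : Fin L → Fin n → Fin q} (hg : PrefixBalanced ε i g) :
    #{c ∈ C | ¬ PrefixBalanced ε (i + 1) (Function.update g i c)} ≤ q ^ L * s := by
  calc #{c ∈ C | ¬ PrefixBalanced ε (i + 1) (Function.update g i c)}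
      ≤ #(univ.biUnion fun u => {c ∈ C |
          1 / (q : ℝ) ^ ((i : ℕ) + 1) + 2 * prefixTol q L ε i
            ≤ prefixType (i + 1) (Function.update g i c) u}) := by
        refine card_le_card fun c hc => ?_
        obtain ⟨hcC, hc⟩ := mem_filter.1 hc
        obtain ⟨u, hu⟩ := exists_le_prefixType_of_not_prefixBalanced hq i
          ((prefixBalanced_update_iff i g c).2 hg) hc
        exact mem_biUnion.2 ⟨u, mem_univ _, mem_filter.2 ⟨hcC, hu⟩⟩
    _ ≤ ∑ _u : Fin L → Fin q, s := card_biUnion_le.trans (sum_le_sum fun u _ =>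
        (card_filter_le_prefixType_update_lt hq hδ i hδi hn hC hg u).le)
    _ = q ^ L * s := by simp

end Extension

section Counting

variable {ι α : Type*} [Fintype ι] [DecidableEq ι] [DecidableEq α]

lemma card_filter_piFinset_le (C : Finset α) (i : ι) (p : (ι → α) → Prop) [DecidablePred p]
    (K : ℕ) (hK : ∀ g : ι → α, #{c ∈ C | p (Function.update g i c)} ≤ K) :
    #{cs ∈ Fintype.piFinset (fun _ => C) | p cs} ≤ K * #C ^ (Fintype.card ι - 1) := by
  rcases C.eq_empty_or_nonempty with rfl | ⟨c₀, hc₀⟩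
  · have : Nonempty ι := ⟨i⟩
    simp
  set T := {cs ∈ Fintype.piFinset (fun _ : ι => C) | p cs}
  set t := Fintype.piFinset fun j => if j = i then {c₀} else C
  have ht : #t = #C ^ (Fintype.card ι - 1) := by
    rw [Fintype.card_piFinset, prod_apply_ite, filter_eq', filter_ne']
    simp [card_erase_of_mem]
  rw [← ht]
  refine card_le_mul_card_image_of_maps_to (f := fun cs => Function.update cs i c₀)
    (fun cs hcs => ?_) K fun g _ => ?_
  · have hcs := Fintype.mem_piFinset.1 (mem_filter.1 hcs).1
    refine Fintype.mem_piFinset.2 fun j => ?_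
    by_cases hj : j = i
    · subst hj; simp
    · simp [hj, hcs j]
  · have hfiber : ∀ cs ∈ {cs ∈ T | Function.update cs i c₀ = g},
        cs = Function.update g i (cs i) := fun cs hcs => by
      rw [← (mem_filter.1 hcs).2, Function.update_idem, Function.update_eq_self]
    refine (card_le_card_of_injOn (fun cs => cs i) (fun cs hcs => ?_)
      fun cs hcs cs' hcs' h => ?_).trans (hK g)
    · obtain ⟨hpi, hp⟩ := mem_filter.1 (mem_filter.1 hcs).1
      exact mem_filter.2 ⟨Fintype.mem_piFinset.1 hpi i, hfiber cs hcs ▸ hp⟩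
    · rw [hfiber cs hcs, hfiber cs' hcs']
      exact congrArg _ h

lemma card_filter_not_injective_le (C : Finset α) :
    #{cs ∈ Fintype.piFinset (fun _ : ι => C) | ¬ Function.Injective cs}
      ≤ Fintype.card ι ^ 2 * #C ^ (Fintype.card ι - 1) := by
  calc #{cs ∈ Fintype.piFinset (fun _ : ι => C) | ¬ Function.Injective cs}
      ≤ #((univ : Finset ι).offDiag.biUnion fun ab =>
          {cs ∈ Fintype.piFinset (fun _ : ι => C) | cs ab.1 = cs ab.2}) := by
        refine card_le_card fun cs hcs => ?_
        obtain ⟨hpi, hcs⟩ := mem_filter.1 hcs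
        obtain ⟨a, b, hab, hne⟩ := Function.not_injective_iff.1 hcs
        exact mem_biUnion.2 ⟨(a, b), by simpa using hne, mem_filter.2 ⟨hpi, hab⟩⟩
    _ ≤ ∑ _ab ∈ (univ : Finset ι).offDiag, 1 * #C ^ (Fintype.card ι - 1) := by
        refine card_biUnion_le.trans (sum_le_sum fun ab hab => ?_)
        refine card_filter_piFinset_le C ab.2 _ 1 fun g => card_le_one.2 fun c hc c' hc' => ?_
        have hne : ab.1 ≠ ab.2 := (mem_offDiag.1 hab).2.2
        simp only [mem_filter, Function.update_of_ne hne, Function.update_self] at hc hc'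
        exact hc.2.symm.trans hc'.2
    _ ≤ Fintype.card ι ^ 2 * #C ^ (Fintype.card ι - 1) := by
        rw [sum_const, smul_eq_mul, one_mul, offDiag_card, card_univ, sq]
        gcongr
        exact Nat.sub_le _ _

lemma card_le_card_filter_and_add (S : Finset α) (p r : α → Prop) [DecidablePred p]
    [DecidablePred r] : #S ≤ #{x ∈ S | p x ∧ r x} + #{x ∈ S | ¬ p x} + #{x ∈ S | ¬ r x} := by
  rw [← card_filter_add_card_filter_not (s := S) (fun x => p x ∧ r x), add_assoc]
  refine add_le_add_right ((card_le_card (t := {x ∈ S | ¬ p x} ∪ {x ∈ S | ¬ r x})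
    fun x hx => ?_).trans (card_union_le _ _)) _
  simp only [mem_filter, mem_union, not_and_or] at hx ⊢
  tauto

end Counting

section BalancedCount

variable {q n L : ℕ} {ε δ : ℝ} {s : ℕ} {C : Finset (Fin n → Fin q)}

lemma exists_prefixBalanced_not_succ (hn : 0 < n) (hε : 0 ≤ ε) {cs : Fin L → Fin n → Fin q}
    (hcs : ¬ PrefixBalanced ε L cs) :
    ∃ i : Fin L, PrefixBalanced ε i cs ∧ ¬ PrefixBalanced ε (i + 1) cs := by
  obtain ⟨m, hm, hm'⟩ := Nat.exists_not_and_succ_of_not_zero_of_exists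
    (p := fun k => k ≤ L ∧ ¬ PrefixBalanced ε k cs)
    (fun h => h.2 (prefixBalanced_zero hn hε cs)) ⟨L, le_rfl, hcs⟩
  exact ⟨⟨m, hm'.1⟩, not_and_not_right.1 hm (by have := hm'.1; omega), hm'.2⟩

lemma card_filter_prefixBalanced_not_succ_le (hq : 2 ≤ q) (hδ : 0 ≤ δ) (i : Fin L)
    (hδi : δ ≤ prefixTol q L ε i) (hn : 4 * s ≤ δ ^ 2 * n)
    (hC : ∀ y, #{c ∈ C | (hammingDist c y : ℝ) ≤ (1 - 1 / q - δ) * n} < s) :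
    #{cs ∈ Fintype.piFinset (fun _ : Fin L => C) |
      PrefixBalanced ε i cs ∧ ¬ PrefixBalanced ε (i + 1) cs} ≤ q ^ L * s * #C ^ (L - 1) := by
  refine (card_filter_piFinset_le C i _ _ fun g => ?_).trans_eq (by rw [Fintype.card_fin])
  simp_rw [prefixBalanced_update_iff]
  by_cases hg : PrefixBalanced ε i g
  · simpa [hg] using card_filter_not_prefixBalanced_update_le hq hδ i hδi hn hC hg
  · simp [hg]

lemma card_filter_not_prefixBalanced_le (hq : 2 ≤ q) (hε : 0 ≤ ε) (hδ : 0 ≤ δ)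
    (hδε : δ ≤ prefixTol q L ε 0) (hn₀ : 0 < n) (hn : 4 * s ≤ δ ^ 2 * n)
    (hC : ∀ y, #{c ∈ C | (hammingDist c y : ℝ) ≤ (1 - 1 / q - δ) * n} < s) :
    #{cs ∈ Fintype.piFinset (fun _ : Fin L => C) | ¬ PrefixBalanced ε L cs}
      ≤ L * (q ^ L * s * #C ^ (L - 1)) := by
  calc #{cs ∈ Fintype.piFinset (fun _ : Fin L => C) | ¬ PrefixBalanced ε L cs}
      ≤ #((univ : Finset (Fin L)).biUnion fun i =>
          {cs ∈ Fintype.piFinset (fun _ : Fin L => C) |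
            PrefixBalanced ε i cs ∧ ¬ PrefixBalanced ε (i + 1) cs}) := by
        refine card_le_card fun cs hcs => ?_
        obtain ⟨hpi, hcs⟩ := mem_filter.1 hcs
        obtain ⟨i, hi⟩ := exists_prefixBalanced_not_succ hn₀ hε hcs
        exact mem_biUnion.2 ⟨i, mem_univ _, mem_filter.2 ⟨hpi, hi⟩⟩
    _ ≤ ∑ _i : Fin L, q ^ L * s * #C ^ (L - 1) := card_biUnion_le.trans (sum_le_sum fun i _ =>
        card_filter_prefixBalanced_not_succ_le hq hδ i
          (hδε.trans (prefixTol_zero_le (by omega) hε i)) hn hC)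
    _ = L * (q ^ L * s * #C ^ (L - 1)) := by simp

lemma card_pow_le_card_filter_injective_prefixBalanced_add (hq : 2 ≤ q) (hε : 0 ≤ ε)
    (hδ : 0 ≤ δ) (hδε : δ ≤ prefixTol q L ε 0) (hn₀ : 0 < n) (hn : 4 * s ≤ δ ^ 2 * n)
    (hC : ∀ y, #{c ∈ C | (hammingDist c y : ℝ) ≤ (1 - 1 / q - δ) * n} < s) :
    #C ^ L ≤ #{cs ∈ Fintype.piFinset (fun _ : Fin L => C) |
        Function.Injective cs ∧ PrefixBalanced ε L cs}
      + (L * (q ^ L * s) + L ^ 2) * #C ^ (L - 1) := by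
  have hinj := card_filter_not_injective_le (ι := Fin L) C
  rw [Fintype.card_fin] at hinj
  calc #C ^ L
      ≤ #{cs ∈ Fintype.piFinset (fun _ : Fin L => C) |
          Function.Injective cs ∧ PrefixBalanced ε L cs}
        + #{cs ∈ Fintype.piFinset (fun _ : Fin L => C) | ¬ Function.Injective cs}
        + #{cs ∈ Fintype.piFinset (fun _ : Fin L => C) | ¬ PrefixBalanced ε L cs} :=
        Fintype.card_piFinset_const C L ▸ card_le_card_filter_and_add _ _ _
    _ ≤ _ + L ^ 2 * #C ^ (L - 1) + L * (q ^ L * s * #C ^ (L - 1)) := by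
        gcongr
        exact card_filter_not_prefixBalanced_le hq hε hδ hδε hn₀ hn hC
    _ = _ := by ring

end BalancedCount

theorem abundance_of_random_like_tuples_general (q L : ℕ) (hq : 3 ≤ q) :
    ∀ ε : ℝ, 0 < ε → ∃ δ : ℝ, 0 < δ ∧ ∀ s : ℕ, 1 ≤ s → ∃ M0 : ℕ, ∃ c : ℝ,
      ∀ n : ℕ, 1 ≤ n → ∀ C : Finset (Fin n → Fin q), M0 ≤ C.card →
        ((∃ C' ⊆ C, s ≤ C'.card ∧ radhCode C' ≤ 1 - 1 / (q : ℝ) - δ) ∨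
          (C.card : ℝ) ^ L - c * (C.card : ℝ) ^ (L - 1) ≤
            (((Fintype.piFinset fun _ : Fin L => C).filter fun cs =>
                Function.Injective cs ∧
                (∀ u : Fin L → Fin q, |typeu cs u - 1 / (q : ℝ) ^ L| ≤ ε) ∧
                (∀ ω : Fin L → ℝ, IsDist ω →
                  |radOmega ω (fun i j => phi q (cs i j)) -
                      fF (fun _ : Fin q => 1 / (q : ℝ)) ω| ≤ (q : ℝ) ^ L * ε)).card : ℝ)) := by
  intro ε hε
  have : NeZero q := ⟨by omega⟩
  have hδ : 0 < prefixTol q L ε 0 := div_pos hε (by positivity)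
  refine ⟨prefixTol q L ε 0, hδ, fun s hs => ?_⟩
  obtain ⟨N, hN⟩ := exists_nat_ge (4 * s / prefixTol q L ε 0 ^ 2)
  refine ⟨q ^ N, L * (q ^ L * s) + L ^ 2, fun n hn₀ C hC => or_iff_not_imp_left.2 fun hfar => ?_⟩
  have hNn : N ≤ n := (Nat.pow_le_pow_iff_right (by omega)).1
    (hC.trans ((card_le_univ C).trans_eq (by simp)))
  have hn : 4 * s ≤ prefixTol q L ε 0 ^ 2 * n := by
    rw [div_le_iff₀' (by positivity)] at hN
    exact hN.trans (by gcongr)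
  have hcount := card_pow_le_card_filter_injective_prefixBalanced_add (by omega) hε.le hδ.le
    le_rfl hn₀ hn (card_filter_hammingDist_le_lt hn₀ hs hfar)
  rw [sub_le_iff_le_add]
  calc (#C : ℝ) ^ L
      ≤ #{cs ∈ Fintype.piFinset (fun _ : Fin L => C) | Function.Injective cs ∧
          PrefixBalanced ε L cs} + (L * (q ^ L * s) + L ^ 2 : ℕ) * (#C : ℝ) ^ (L - 1) := by
        exact_mod_cast hcount
    _ ≤ _ := by
        push_cast
        gcongr ?_ + _
        refine Nat.cast_le.2 (card_le_card (monotone_filter_right _ ?_))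
        rintro cs - ⟨hcs, hbal⟩
        exact ⟨hcs, hbal.abs_typeu_sub_le, fun ω hω =>
          abs_radOmega_sub_fF_le (by omega) cs hbal.abs_typeu_sub_le hω⟩

theorem abundance_of_random_like_tuples (q L : ℕ) (hq : 3 ≤ q) (hL : 2 ≤ L) :
    ∀ ε : ℝ, 0 < ε → ∃ δ : ℝ, 0 < δ ∧ ∀ s : ℕ, 1 ≤ s → ∃ M0 : ℕ, ∃ c : ℝ,
      ∀ n : ℕ, 1 ≤ n → ∀ C : Finset (Fin n → Fin q), M0 ≤ C.card →
        ((∃ C' ⊆ C, s ≤ C'.card ∧ radhCode C' ≤ 1 - 1 / (q : ℝ) - δ) ∨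
          (C.card : ℝ) ^ L - c * (C.card : ℝ) ^ (L - 1) ≤
            (((Fintype.piFinset fun _ : Fin L => C).filter fun cs =>
                Function.Injective cs ∧
                (∀ u : Fin L → Fin q, |typeu cs u - 1 / (q : ℝ) ^ L| ≤ ε) ∧
                (∀ ω : Fin L → ℝ, IsDist ω →
                  |radOmega ω (fun i j => phi q (cs i j)) -
                      fF (fun _ : Fin q => 1 / (q : ℝ)) ω| ≤ (q : ℝ) ^ L * ε)).card : ℝ)) :=
  abundance_of_random_like_tuples_general q L hq
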